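/- arXiv:2411.17362 — 5 statements merged into one kernel-verified Lean document; each statement's English description precedes it below -/
import Mathlib

section
/- For all nonnegative real numbers y and z, there exists a real number λ ∈ [0,1] such that (y^2/2) * e^{-y-z} ≤ λ * (2/e^2) and z * e^{-y-z} ≤ (1-λ) * (1/e). -/
/-- Series lower bound for exp up to degree 4. -/
lemma exp_quartic_lb {y : ℝ} (hy : 0 ≤ y) :
    1 + y + y ^ 2 / 2 + y ^ 3 / 6 + y ^ 4 / 24 ≤ Real.exp y := by
  have h := Real.sum_le_exp_of_nonneg hy 5
  simp [Finset.sum_range_succ] at h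
  norm_num [Nat.factorial] at h
  linarith

/-- `E * x ≤ exp x` for all real x. -/
lemma e_mul_le_exp (x : ℝ) : Real.exp 1 * x ≤ Real.exp x := by
  have h := Real.add_one_le_exp (x - 1)
  have := Real.exp_pos 1
  calc Real.exp 1 * x ≤ Real.exp 1 * Real.exp (x - 1) := by
        have : x ≤ Real.exp (x - 1) := by linarith
        nlinarith [Real.exp_pos 1]
    _ = Real.exp x := by rw [← Real.exp_add]; ring_nf
  
/-- `y² e² / 4 ≤ exp y`. -/
lemma sq_e_sq_le_exp {y : ℝ} (hy : 0 ≤ y) : y ^ 2 * Real.exp 1 ^ 2 / 4 ≤ Real.exp y := by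
  have h := e_mul_le_exp (y / 2)
  have h2 : Real.exp (y / 2) * Real.exp (y / 2) = Real.exp y := by
    rw [← Real.exp_add]; ring_nf
  have hnn : 0 ≤ Real.exp 1 * (y / 2) := by positivity
  nlinarith [Real.exp_pos (y / 2)]

/-- Key lemma: `e (e^y - 1) ≥ (e - 1) y² e² / 4`. -/
lemma key_slack {y : ℝ} (hy : 0 ≤ y) :
    (Real.exp 1 - 1) * (y ^ 2 * Real.exp 1 ^ 2 / 4) ≤ Real.exp 1 * (Real.exp y - 1) := by
  have hser := exp_quartic_lb hy
  have hE1 := Real.exp_one_gt_d9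
  have hE2 := Real.exp_one_lt_d9
  set E := Real.exp 1 with hE
  have hc : (E - 1) * E ^ 2 / 4 ≤ 3.17413 := by nlinarith [sq_nonneg (E - 2.7182818286), mul_pos (by linarith : (0:ℝ) < E) (by linarith : (0:ℝ) < E)]
  have hpoly : 3.17413 * y ^ 2 ≤ 2.7182818283 * (y + y ^ 2 / 2 + y ^ 3 / 6 + y ^ 4 / 24) := by
    nlinarith [mul_nonneg hy (sq_nonneg (y - 2)), sq_nonneg (y - 1.3), sq_nonneg y,
      mul_nonneg (mul_nonneg hy hy) hy]
  nlinarith [sq_nonneg y, Real.exp_pos y]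

/-- Main inequality: `y² e²/4 + e z ≤ exp (y+z)`. -/
lemma main_ineq {y z : ℝ} (hy : 0 ≤ y) (hz : 0 ≤ z) :
    y ^ 2 * Real.exp 1 ^ 2 / 4 + Real.exp 1 * z ≤ Real.exp (y + z) := by
  have hA := sq_e_sq_le_exp hy
  have hB := e_mul_le_exp z
  have hbz : 1 + z ≤ Real.exp z := by linarith [Real.add_one_le_exp z]
  have hM := key_slack hy
  have hab : Real.exp (y + z) = Real.exp y * Real.exp z := Real.exp_add y z
  set E := Real.exp 1
  set a := Real.exp y
  set b := Real.exp z
  set A := y ^ 2 * E ^ 2 / 4 with hAdef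
  have hA0 : 0 ≤ A := by positivity
  have t1 : 0 ≤ A * (b - 1 - z) := mul_nonneg hA0 (by linarith)
  have t2 : 0 ≤ (a - A) * (b - E * z) := mul_nonneg (by linarith) (by linarith)
  have t3 : 0 ≤ z * (A - E + a * E - A * E) := mul_nonneg hz (by nlinarith)
  rw [hab]
  nlinarith [t1, t2, t3]

theorem exists_lambda_bound (y z : ℝ) (hy : 0 ≤ y) (hz : 0 ≤ z) :
    ∃ l : ℝ, l ∈ Set.Icc (0 : ℝ) 1 ∧
      y ^ 2 / 2 * Real.exp (-y - z) ≤ l * (2 / Real.exp 1 ^ 2) ∧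
      z * Real.exp (-y - z) ≤ (1 - l) * (1 / Real.exp 1) := by
  have hkey := main_ineq hy hz
  have hX : Real.exp (-y - z) = (Real.exp (y + z))⁻¹ := by
    rw [← Real.exp_neg]; ring_nf
  have hXpos : (0:ℝ) < Real.exp (y + z) := Real.exp_pos _
  have hEpos : (0:ℝ) < Real.exp 1 := Real.exp_pos 1
  refine ⟨1 - Real.exp 1 * z * Real.exp (-y - z), ⟨?_, ?_⟩, ?_, ?_⟩
  · -- 0 ≤ l : need E z exp(-y-z) ≤ 1
    rw [hX, sub_nonneg]
    rw [← div_eq_mul_inv, div_le_one hXpos]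
    nlinarith [sq_nonneg y, sq_nonneg (Real.exp 1), mul_nonneg (mul_nonneg (sq_nonneg y) (sq_nonneg (Real.exp 1))) (le_refl (0:ℝ))]
  · -- l ≤ 1
    have : 0 ≤ Real.exp 1 * z * Real.exp (-y - z) := by positivity
    linarith
  · -- first bound
    rw [hX, sub_mul, one_mul, le_sub_iff_add_le]
    have h1 : y ^ 2 / 2 * (Real.exp (y + z))⁻¹ + Real.exp 1 * z * (Real.exp (y + z))⁻¹ * (2 / Real.exp 1 ^ 2)
        = (y ^ 2 * Real.exp 1 ^ 2 / 4 + Real.exp 1 * z) * (2 / Real.exp 1 ^ 2) * (Real.exp (y + z))⁻¹ := by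
      field_simp
      ring
    rw [h1]
    calc (y ^ 2 * Real.exp 1 ^ 2 / 4 + Real.exp 1 * z) * (2 / Real.exp 1 ^ 2) * (Real.exp (y + z))⁻¹
        ≤ Real.exp (y + z) * (2 / Real.exp 1 ^ 2) * (Real.exp (y + z))⁻¹ := by
          apply mul_le_mul_of_nonneg_right
          · apply mul_le_mul_of_nonneg_right hkey (by positivity)
          · positivity
      _ = 2 / Real.exp 1 ^ 2 := by field_simp
  · -- second bound: equality
    have : (1 - (1 - Real.exp 1 * z * Real.exp (-y - z))) * (1 / Real.exp 1)
        = z * Real.exp (-y - z) := by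
      field_simp
      ring
    rw [this]
end

section
/- For all nonnegative real numbers y, z ≥ 0, we have e^{y+z} - (y^2 * e^2)/4 - z*e ≥ 0. -/
theorem exp_sub_quadratic_nonneg (y z : ℝ) (hy : 0 ≤ y) (hz : 0 ≤ z) :
    Real.exp (y + z) - y ^ 2 * Real.exp 1 ^ 2 / 4 - z * Real.exp 1 ≥ 0 := by
  have key : ∀ x : ℝ, Real.exp 1 * x ≤ Real.exp x := by
    intro x
    calc Real.exp 1 * x ≤ Real.exp 1 * Real.exp (x - 1) :=
          mul_le_mul_of_nonneg_left (by linarith [Real.add_one_le_exp (x - 1)])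
            (Real.exp_pos 1).le
      _ = Real.exp x := by rw [← Real.exp_add]; ring_nf
  have hq : y ^ 2 * Real.exp 1 ^ 2 / 4 ≤ Real.exp y := by
    have h1 : Real.exp 1 * (y / 2) ≤ Real.exp (y / 2) := key _
    have h0 : 0 ≤ Real.exp 1 * (y / 2) := mul_nonneg (Real.exp_pos 1).le (by linarith)
    have hm := mul_le_mul h1 h1 h0 (Real.exp_pos _).le
    rw [← Real.exp_add] at hm
    have hyy : y / 2 + y / 2 = y := by ring
    rw [hyy] at hm
    nlinarith [hm]
  rcases le_or_gt y 1 with h | h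
  · have h1 := key (y + z)
    have h2 : y ^ 2 * Real.exp 1 ^ 2 / 4 ≤ Real.exp 1 * y := by
      have h4 : Real.exp 1 * y ≤ 4 := by
        nlinarith [Real.exp_one_lt_d9, Real.exp_pos 1]
      nlinarith [mul_nonneg (mul_nonneg (Real.exp_pos 1).le hy)
        (by linarith : (0:ℝ) ≤ 4 - Real.exp 1 * y)]
    nlinarith [h1]
  · have he : Real.exp 1 ≤ Real.exp y := Real.exp_le_exp.mpr h.le
    have hz1 : 1 + z ≤ Real.exp z := by linarith [Real.add_one_le_exp z]
    have hm : Real.exp y * (1 + z) ≤ Real.exp (y + z) := by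
      rw [Real.exp_add]
      exact mul_le_mul_of_nonneg_left hz1 (Real.exp_pos y).le
    nlinarith [Real.exp_pos y]
end

section
/- In any graph H, a non-isolated vertex v is detectable in H if and only if v has degree 1 or v is happy in H (i.e., all neighbors of v have degree at least 2). Moreover, isolated vertices are not detectable. -/
variable {V : Type*} [Fintype V]

/-- A non-isolated vertex `v` is obscure in `H` if there exist distinct
non-isolated vertices `v₁, v₂` with `deg_{H - v₁}(v₂) > 0` and an induced subgraph of
`H - v₁ - v₂` isomorphic to `M(H - v)`, the restriction of `H - v` to its
non-isolated vertices. -/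
def Obscure (H : SimpleGraph V) (v : V) : Prop :=
  (∃ u, H.Adj v u) ∧
  ∃ (v₁ v₂ : V) (A : Set V), v₁ ≠ v₂ ∧ (∃ u, H.Adj v₁ u) ∧
    (∃ u, u ≠ v₁ ∧ H.Adj v₂ u) ∧ v₁ ∉ A ∧ v₂ ∉ A ∧
    Nonempty ((SimpleGraph.induce {w | w ≠ v ∧ ∃ u, u ≠ v ∧ H.Adj w u} H) ≃g
      (SimpleGraph.induce A H))

/-- A non-isolated vertex is detectable if it is not obscure. -/
def Detectable (H : SimpleGraph V) (v : V) : Prop :=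
  (∃ u, H.Adj v u) ∧ ¬ Obscure H v

/-- A non-isolated vertex is happy if all of its neighbors have degree at least 2. -/
def Happy (H : SimpleGraph V) (v : V) : Prop :=
  (∃ u, H.Adj v u) ∧ ∀ u, H.Adj v u → 2 ≤ (H.neighborSet u).ncard

set_option linter.unusedSectionVars false

lemma vertex_card_of_iso {S A : Set V} (H : SimpleGraph V)
    (e : (SimpleGraph.induce S H) ≃g (SimpleGraph.induce A H)) : S.ncard = A.ncard := by
  rw [← Nat.card_coe_set_eq, ← Nat.card_coe_set_eq]
  exact Nat.card_congr e.toEquiv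

lemma pair_card_of_iso {S A : Set V} (H : SimpleGraph V)
    (e : (SimpleGraph.induce S H) ≃g (SimpleGraph.induce A H)) :
    {p : V × V | p.1 ∈ S ∧ p.2 ∈ S ∧ H.Adj p.1 p.2}.ncard
      = {p : V × V | p.1 ∈ A ∧ p.2 ∈ A ∧ H.Adj p.1 p.2}.ncard := by
  rw [← Nat.card_coe_set_eq, ← Nat.card_coe_set_eq]
  refine Nat.card_congr ⟨fun p => ⟨((e ⟨p.1.1, p.2.1⟩ : A), (e ⟨p.1.2, p.2.2.1⟩ : A)),
      (e ⟨p.1.1, p.2.1⟩).2, (e ⟨p.1.2, p.2.2.1⟩).2, ?_⟩,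
    fun p => ⟨((e.symm ⟨p.1.1, p.2.1⟩ : S), (e.symm ⟨p.1.2, p.2.2.1⟩ : S)),
      (e.symm ⟨p.1.1, p.2.1⟩).2, (e.symm ⟨p.1.2, p.2.2.1⟩).2, ?_⟩, ?_, ?_⟩
  · exact e.map_adj_iff.mpr p.2.2.2
  · exact e.symm.map_adj_iff.mpr p.2.2.2
  · intro p
    ext <;> simp
  · intro p
    ext <;> simp

lemma iso_nonisolated {S A : Set V} (H : SimpleGraph V)
    (e : (SimpleGraph.induce S H) ≃g (SimpleGraph.induce A H))
    (hS : ∀ w ∈ S, ∃ x ∈ S, H.Adj w x) :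
    ∀ a ∈ A, ∃ b ∈ A, H.Adj a b := by
  intro a ha
  obtain ⟨x, hx, hadj⟩ := hS (e.symm ⟨a, ha⟩ : S) (e.symm ⟨a, ha⟩).2
  refine ⟨(e ⟨x, hx⟩ : A), (e ⟨x, hx⟩).2, ?_⟩
  have h2 : (SimpleGraph.induce A H).Adj (e (e.symm ⟨a, ha⟩)) (e ⟨x, hx⟩) :=
    e.map_adj_iff.mpr hadj
  rwa [e.apply_symm_apply] at h2

lemma S_nonisolated {H : SimpleGraph V} {v : V} :
    ∀ w ∈ {w | w ≠ v ∧ ∃ u, u ≠ v ∧ H.Adj w u}, ∃ x ∈ {w | w ≠ v ∧ ∃ u, u ≠ v ∧ H.Adj w u},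
      H.Adj w x := by
  rintro w ⟨hwv, x, hxv, hadj⟩
  exact ⟨x, ⟨hxv, w, hwv, hadj.symm⟩, hadj⟩

lemma obscure_deg_one_neighbor {H : SimpleGraph V} {v : V} (hob : Obscure H v) :
    ∃ u, H.Adj v u ∧ ∀ x, H.Adj u x → x = v := by
  by_contra hcon
  push_neg at hcon
  obtain ⟨⟨u0, hu0⟩, v₁, v₂, A, hne, ⟨w₁, hw₁⟩, ⟨u', hu'ne, hu'⟩, hv₁A, hv₂A, ⟨e⟩⟩ := hob
  set S : Set V := {w | w ≠ v ∧ ∃ u, u ≠ v ∧ H.Adj w u} with hSdef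
  set N : Set V := {w | ∃ x, H.Adj w x} with hNdef
  have hSN : S = N \ {v} := by
    ext w
    simp only [hSdef, hNdef, Set.mem_setOf_eq, Set.mem_diff, Set.mem_singleton_iff]
    constructor
    · rintro ⟨hwv, x, hxv, hadj⟩
      exact ⟨⟨x, hadj⟩, hwv⟩
    · rintro ⟨⟨x, hadj⟩, hwv⟩
      refine ⟨hwv, ?_⟩
      by_cases hxv : x = v
      · subst hxv
        obtain ⟨y, hy, hyv⟩ := hcon w hadj.symm
        exact ⟨y, hyv, hy⟩
      · exact ⟨x, hxv, hadj⟩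
  have hAsub : A ⊆ N \ {v₁, v₂} := by
    intro a ha
    obtain ⟨b, _, hab⟩ := iso_nonisolated H e S_nonisolated a ha
    refine ⟨show a ∈ N by simp only [hNdef, Set.mem_setOf_eq]; exact ⟨b, hab⟩, ?_⟩
    simp only [Set.mem_insert_iff, Set.mem_singleton_iff]
    rintro (rfl | rfl)
    · exact hv₁A ha
    · exact hv₂A ha
  have hsub2 : {v₁, v₂} ⊆ N := by
    intro x hx
    simp only [Set.mem_insert_iff, Set.mem_singleton_iff] at hx
    simp only [hNdef, Set.mem_setOf_eq]
    rcases hx with rfl | rfl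
    · exact ⟨w₁, hw₁⟩
    · exact ⟨u', hu'⟩
  have hc1 : S.ncard = A.ncard := vertex_card_of_iso H e
  have hc2 : A.ncard ≤ (N \ {v₁, v₂}).ncard := Set.ncard_le_ncard hAsub (Set.toFinite _)
  have hc3 : (N \ {v₁, v₂}).ncard = N.ncard - 2 := by
    rw [Set.ncard_diff hsub2 (Set.toFinite _), Set.ncard_pair hne]
  have hvN : v ∈ N := by
    simp only [hNdef, Set.mem_setOf_eq]
    exact ⟨u0, hu0⟩
  have hc4 : (N \ {v}).ncard = N.ncard - 1 :=
    Set.ncard_diff_singleton_of_mem hvN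
  have hc5 : 2 ≤ N.ncard := by
    rw [← Set.ncard_pair hne]
    exact Set.ncard_le_ncard hsub2 (Set.toFinite _)
  rw [hSN, hc4] at hc1
  omega

lemma obscure_pendant {H : SimpleGraph V} {v u : V} (hvu : H.Adj v u)
    (hob : Obscure H v)
    (huniq : ∀ x, H.Adj v x → x = u) (hu : ∀ x, H.Adj u x → x = v) : False := by
  obtain ⟨-, v₁, v₂, A, hne, ⟨w₁, hw₁⟩, ⟨u', hu'ne, hu'⟩, hv₁A, hv₂A, ⟨e⟩⟩ := hob
  have hPS : {p : V × V | p.1 ∈ {w | w ≠ v ∧ ∃ u, u ≠ v ∧ H.Adj w u}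
        ∧ p.2 ∈ {w | w ≠ v ∧ ∃ u, u ≠ v ∧ H.Adj w u} ∧ H.Adj p.1 p.2}
      = {p : V × V | H.Adj p.1 p.2} \ {(v, u), (u, v)} := by
    ext ⟨x, y⟩
    simp only [Set.mem_setOf_eq, Set.mem_diff, Set.mem_insert_iff,
      Set.mem_singleton_iff, Prod.mk.injEq, not_or]
    constructor
    · rintro ⟨⟨hxv, a, hav, hxa⟩, ⟨hyv, b, hbv, hyb⟩, hadj⟩
      refine ⟨hadj, ?_, ?_⟩
      · rintro ⟨rfl, rfl⟩
        exact hxv rfl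
      · rintro ⟨rfl, rfl⟩
        exact hav (hu a hxa)
    · rintro ⟨hadj, h1, h2⟩
      have hxv : x ≠ v := by
        rintro rfl
        exact h1 ⟨rfl, huniq y hadj⟩
      have hyv : y ≠ v := by
        rintro rfl
        exact h2 ⟨huniq x hadj.symm, rfl⟩
      exact ⟨⟨hxv, y, hyv, hadj⟩, ⟨hyv, x, hxv, hadj.symm⟩, hadj⟩
  have cP2 : ({(v, u), (u, v)} : Set (V × V)) ⊆ {p : V × V | H.Adj p.1 p.2} := by
    intro p hp
    simp only [Set.mem_insert_iff, Set.mem_singleton_iff] at hp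
    rcases hp with rfl | rfl
    · exact hvu
    · exact hvu.symm
  have n1 : v₁ ≠ w₁ := hw₁.ne
  have n3 : v₁ ≠ u' := Ne.symm hu'ne
  have n4 : v₂ ≠ u' := hu'.ne
  have hFsub : ({(v₁, w₁), (w₁, v₁), (v₂, u'), (u', v₂)} : Set (V × V))
      ⊆ {p : V × V | H.Adj p.1 p.2} := by
    intro p hp
    simp only [Set.mem_insert_iff, Set.mem_singleton_iff] at hp
    rcases hp with rfl | rfl | rfl | rfl
    · exact hw₁
    · exact hw₁.symm
    · exact hu'
    · exact hu'.symm
  have hF4 : ({(v₁, w₁), (w₁, v₁), (v₂, u'), (u', v₂)} : Set (V × V)).ncard = 4 := by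
    rw [Set.ncard_insert_of_notMem (by simp [Prod.ext_iff, n1, hne, n3]) (Set.toFinite _),
        Set.ncard_insert_of_notMem (by simp [Prod.ext_iff, n3, hne]) (Set.toFinite _),
        Set.ncard_pair (by simp [Prod.ext_iff, n4])]
  have hPAsub : {p : V × V | p.1 ∈ A ∧ p.2 ∈ A ∧ H.Adj p.1 p.2}
      ⊆ {p : V × V | H.Adj p.1 p.2} \ {(v₁, w₁), (w₁, v₁), (v₂, u'), (u', v₂)} := by
    rintro ⟨x, y⟩ ⟨hx, hy, hadj⟩
    refine ⟨hadj, ?_⟩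
    simp only [Set.mem_insert_iff, Set.mem_singleton_iff, Prod.mk.injEq, not_or]
    refine ⟨?_, ?_, ?_, ?_⟩ <;> rintro ⟨rfl, rfl⟩
    · exact hv₁A hx
    · exact hv₁A hy
    · exact hv₂A hx
    · exact hv₂A hy
  have c3 := pair_card_of_iso H e
  have c1 : {p : V × V | p.1 ∈ {w | w ≠ v ∧ ∃ u, u ≠ v ∧ H.Adj w u}
        ∧ p.2 ∈ {w | w ≠ v ∧ ∃ u, u ≠ v ∧ H.Adj w u} ∧ H.Adj p.1 p.2}.ncard
      = {p : V × V | H.Adj p.1 p.2}.ncard - 2 := by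
    rw [hPS, Set.ncard_diff cP2 (Set.toFinite _),
      Set.ncard_pair (by simp [Prod.ext_iff, hvu.ne])]
  have c2 : {p : V × V | p.1 ∈ A ∧ p.2 ∈ A ∧ H.Adj p.1 p.2}.ncard
      ≤ ({p : V × V | H.Adj p.1 p.2} \ {(v₁, w₁), (w₁, v₁), (v₂, u'), (u', v₂)}).ncard :=
    Set.ncard_le_ncard hPAsub (Set.toFinite _)
  have c2' : ({p : V × V | H.Adj p.1 p.2}
        \ ({(v₁, w₁), (w₁, v₁), (v₂, u'), (u', v₂)} : Set (V × V))).ncard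
      = {p : V × V | H.Adj p.1 p.2}.ncard - 4 := by
    rw [Set.ncard_diff hFsub (Set.toFinite _), hF4]
  have c4 : 4 ≤ {p : V × V | H.Adj p.1 p.2}.ncard :=
    hF4 ▸ Set.ncard_le_ncard hFsub (Set.toFinite _)
  omega

theorem detectable_iff (H : SimpleGraph V) :
    (∀ v : V, (∃ u, H.Adj v u) →
      (Detectable H v ↔ ((H.neighborSet v).ncard = 1 ∨ Happy H v))) ∧
    (∀ v : V, ¬ (∃ u, H.Adj v u) → ¬ Detectable H v) := by
  refine ⟨fun v hv => ?_, fun v hv hd => hv hd.1⟩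
  constructor
  · rintro ⟨-, hno⟩
    by_contra hcon
    push_neg at hcon
    obtain ⟨h1, h2⟩ := hcon
    apply hno
    rw [Happy] at h2
    push_neg at h2
    obtain ⟨u, huv, hdeg⟩ := h2 hv
    -- u is a neighbor of v of degree 1
    have hupos : 0 < (H.neighborSet u).ncard :=
      (Set.ncard_pos (Set.toFinite _)).mpr ⟨v, huv.symm⟩
    have hu1 : (H.neighborSet u).ncard = 1 := by omega
    obtain ⟨a, ha⟩ := Set.ncard_eq_one.mp hu1
    have hav : a = v := by
      have hmem : v ∈ H.neighborSet u := huv.symm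
      rw [ha, Set.mem_singleton_iff] at hmem
      exact hmem.symm
    subst hav
    have hu : ∀ x, H.Adj u x → x = a := by
      intro x hx
      have hmem : x ∈ H.neighborSet u := hx
      rwa [ha, Set.mem_singleton_iff] at hmem
    -- v has a neighbor other than u
    have hvpos : 0 < (H.neighborSet a).ncard := (Set.ncard_pos (Set.toFinite _)).mpr ⟨u, huv⟩
    have h2lt : 1 < (H.neighborSet a).ncard := by omega
    obtain ⟨x, y, hx, hy, hxy⟩ := (Set.one_lt_ncard_iff (Set.toFinite _)).mp h2lt
    have hex : ∃ u', u' ≠ u ∧ H.Adj a u' := by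
      by_cases hxu : x = u
      · exact ⟨y, by rintro rfl; exact hxy hxu, hy⟩
      · exact ⟨x, hxu, hx⟩
    obtain ⟨u', hu'u, hu'⟩ := hex
    refine ⟨hv, u, a, {w | w ≠ a ∧ ∃ z, z ≠ a ∧ H.Adj w z}, huv.ne', ⟨a, huv.symm⟩,
      ⟨u', hu'u, hu'⟩, ?_, ?_, ⟨SimpleGraph.Iso.refl⟩⟩
    · rintro ⟨-, z, hza, huz⟩
      exact hza (hu z huz)
    · rintro ⟨h, -⟩
      exact h rfl
  · intro h
    refine ⟨hv, fun hob => ?_⟩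
    obtain ⟨u, huv, hu⟩ := obscure_deg_one_neighbor hob
    rcases h with h1 | hH
    · obtain ⟨a, ha⟩ := Set.ncard_eq_one.mp h1
      have hau : a = u := by
        have hmem : u ∈ H.neighborSet v := huv
        rw [ha, Set.mem_singleton_iff] at hmem
        exact hmem.symm
      subst hau
      refine obscure_pendant huv hob (fun x hx => ?_) hu
      have hmem : x ∈ H.neighborSet v := hx
      rwa [ha, Set.mem_singleton_iff] at hmem
    · have h2 := hH.2 u huv
      have hsub : H.neighborSet u ⊆ {v} := fun x hx =>
        Set.mem_singleton_iff.mpr (hu x hx)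
      have hle : (H.neighborSet u).ncard ≤ 1 := by
        simpa using Set.ncard_le_ncard hsub (Set.toFinite _)
      omega
end

section
/- Fix positive reals C and ε. Then there exists δ = δ(C, ε) > 0 such that: for all positive integers k, ℓ with ℓ ≤ Ck and any graph H with k vertices, ℓ edges, and maximum degree at least εk, there exist positive reals a, b with a + δ ≤ b ≤ ε such that no vertex of H has degree in the open interval (ak, bk), and the number s of vertices of H with degree at least bk satisfies 1 ≤ s ≤ 2C/δ. -/
set_option maxHeartbeats 1000000 in
theorem exists_degree_gap (C ε : ℝ) (hC : 0 < C) (hε : 0 < ε) :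
    ∃ δ : ℝ, 0 < δ ∧
      ∀ (V : Type) (instV : Fintype V) (H : SimpleGraph V) (k ℓ : ℕ),
        0 < k → 0 < ℓ → @Fintype.card V instV = k → H.edgeSet.ncard = ℓ →
        (ℓ : ℝ) ≤ C * k →
        (∃ v : V, ε * k ≤ ((H.neighborSet v).ncard : ℝ)) →
        ∃ a b : ℝ, 0 < a ∧ a + δ ≤ b ∧ b ≤ ε ∧
          (∀ v : V, ¬ (a * k < ((H.neighborSet v).ncard : ℝ) ∧
            ((H.neighborSet v).ncard : ℝ) < b * k)) ∧
          1 ≤ {v : V | b * k ≤ ((H.neighborSet v).ncard : ℝ)}.ncard ∧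
          ({v : V | b * k ≤ ((H.neighborSet v).ncard : ℝ)}.ncard : ℝ) ≤ 2 * C / δ := by
  classical
  set m : ℕ := ⌈4 * C / ε⌉₊ + 1 with hm
  have hm1 : 1 ≤ m := Nat.le_add_left 1 _
  have hm0 : (0 : ℝ) < m := by exact_mod_cast Nat.lt_of_lt_of_le Nat.zero_lt_one hm1
  set δ : ℝ := ε / (2 * m) with hδdef
  have hδ0 : 0 < δ := by positivity
  have hmδ : (m : ℝ) * δ = ε / 2 := by
    rw [hδdef]
    field_simp
  have hCm : 4 * C / ε < (m : ℝ) := by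
    have h1 := Nat.le_ceil (4 * C / ε)
    have h2 : ((⌈4 * C / ε⌉₊ : ℕ) : ℝ) < (m : ℝ) := by
      exact_mod_cast Nat.lt_succ_self _
    linarith
  clear hm hδdef
  clear_value m δ
  refine ⟨δ, hδ0, ?_⟩
  intro V instV H k ℓ hk hl hcard hedge hlCk hmax
  letI := instV
  obtain ⟨v0, hv0⟩ := hmax
  have hk0 : (0 : ℝ) < k := by exact_mod_cast hk
  -- degrees
  have hd : ∀ v : V, (H.neighborSet v).ncard = H.degree v := by
    intro v
    rw [Set.ncard_eq_toFinset_card']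
    rfl
  have hedgefin : H.edgeFinset.card = ℓ := by
    rw [← hedge, ← SimpleGraph.coe_edgeFinset, Set.ncard_coe_finset]
  have hsum : ∑ v : V, (H.degree v : ℝ) = 2 * ℓ := by
    have := H.sum_degrees_eq_twice_card_edges
    rw [hedgefin] at this
    exact_mod_cast this
  -- the set of high-degree vertices
  set S : Finset V := Finset.univ.filter (fun v => (ε / 2) * k < (H.degree v : ℝ)) with hS
  have hScard : (S.card : ℝ) ≤ 4 * C / ε := by
    have h1 : (S.card : ℝ) * ((ε / 2) * k) ≤ ∑ v ∈ S, (H.degree v : ℝ) := by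
      calc (S.card : ℝ) * ((ε / 2) * k) = ∑ _v ∈ S, (ε / 2) * k := by
            rw [Finset.sum_const, nsmul_eq_mul]
        _ ≤ ∑ v ∈ S, (H.degree v : ℝ) := by
            apply Finset.sum_le_sum
            intro v hv
            have := (Finset.mem_filter.mp hv).2
            linarith
    have h2 : ∑ v ∈ S, (H.degree v : ℝ) ≤ ∑ v : V, (H.degree v : ℝ) :=
      Finset.sum_le_sum_of_subset_of_nonneg (Finset.subset_univ S)
        (fun v _ _ => by positivity)
    have h3 : (S.card : ℝ) * ((ε / 2) * k) ≤ 2 * C * k := by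
      rw [hsum] at h2
      nlinarith
    rw [le_div_iff₀ hε]
    nlinarith
  have hScard' : S.card < m := by
    by_contra hcon
    push_neg at hcon
    have : (m : ℝ) ≤ (S.card : ℝ) := by exact_mod_cast hcon
    linarith
  -- pigeonhole: some interval (ε/2 + iδ, ε/2 + iδ + δ) is free of degrees
  have hgap : ∃ i : ℕ, i < m ∧ ∀ v : V,
      ¬ ((ε / 2 + i * δ) * k < (H.degree v : ℝ) ∧
        (H.degree v : ℝ) < (ε / 2 + i * δ + δ) * k) := by
    by_contra hcon
    push_neg at hcon
    choose f hf1 hf2 using hcon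
    set g : Fin m → V := fun i => f i i.2 with hg
    have hmem : ∀ i : Fin m, g i ∈ S := by
      intro i
      rw [hS, Finset.mem_filter]
      refine ⟨Finset.mem_univ _, ?_⟩
      have h1 := hf1 i i.2
      have h2 : (ε / 2) * k ≤ (ε / 2 + (i : ℕ) * δ) * k := by
        have : (0:ℝ) ≤ (i:ℕ) * δ := by positivity
        nlinarith
      exact lt_of_le_of_lt h2 h1
    have key : ∀ i j : Fin m, (i : ℕ) < (j : ℕ) → g i ≠ g j := by
      intro i j hlt heq
      simp only [hg] at heq
      have h1 := hf2 i i.2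
      have h2 := hf1 j j.2
      rw [heq] at h1
      have hij' : ((i : ℕ) : ℝ) + 1 ≤ ((j : ℕ) : ℝ) := by exact_mod_cast hlt
      have h3 : (ε / 2 + (i:ℕ) * δ + δ) * k ≤ (ε / 2 + (j:ℕ) * δ) * k := by
        have : (ε / 2 + (i:ℕ) * δ + δ) ≤ (ε / 2 + (j:ℕ) * δ) := by nlinarith
        nlinarith
      linarith
    have hinj : Function.Injective g := by
      intro i j hij
      by_contra hne
      rcases Nat.lt_or_ge (i : ℕ) (j : ℕ) with h | h
      · exact key i j h hij
      · rcases Nat.lt_or_ge (j : ℕ) (i : ℕ) with h' | h'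
        · exact key j i h' hij.symm
        · exact hne (Fin.ext (le_antisymm h' h))
    have : m ≤ S.card := by
      have := Finset.card_le_card_of_injOn (s := (Finset.univ : Finset (Fin m)))
        (t := S) g (fun i _ => hmem i) (fun i _ j _ h => hinj h)
      simpa using this
    omega
  obtain ⟨i, hi, hempty⟩ := hgap
  have hbε : ε / 2 + i * δ + δ ≤ ε := by
    have hi1 : ((i : ℝ) + 1) ≤ (m : ℝ) := by exact_mod_cast hi
    nlinarith
  have hbk : (ε / 2 + i * δ + δ) * k ≤ ε * k := by nlinarith
  refine ⟨ε / 2 + i * δ, ε / 2 + i * δ + δ, by positivity, le_refl _, hbε, ?_, ?_, ?_⟩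
  · intro v hv
    rw [hd v] at hv
    exact hempty v hv
  · have hmem0 : v0 ∈ {v : V | (ε / 2 + i * δ + δ) * k ≤ ((H.neighborSet v).ncard : ℝ)} := by
      exact le_trans hbk hv0
    exact (Set.ncard_pos (Set.toFinite _)).mpr ⟨v0, hmem0⟩
  · have hsub : {v : V | (ε / 2 + i * δ + δ) * k ≤ ((H.neighborSet v).ncard : ℝ)} ⊆ (S : Set V) := by
      intro v hv
      simp only [Set.mem_setOf_eq] at hv
      rw [hd v] at hv
      simp only [hS, Finset.coe_filter, Set.mem_setOf_eq, Finset.mem_univ, true_and]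
      have h2 : (ε / 2) * k < (ε / 2 + (i : ℕ) * δ + δ) * k := by
        have : (0:ℝ) ≤ (i:ℕ) * δ := by positivity
        nlinarith
      exact lt_of_lt_of_le h2 hv
    have h4 : ({v : V | (ε / 2 + i * δ + δ) * k ≤ ((H.neighborSet v).ncard : ℝ)}.ncard : ℝ)
        ≤ (S.card : ℝ) := by
      have := Set.ncard_le_ncard hsub (Set.toFinite _)
      rw [Set.ncard_coe_finset] at this
      exact_mod_cast this
    have h5 : 4 * C / ε ≤ 2 * C / δ := by
      rw [div_le_div_iff₀ hε hδ0]
      have hδε : δ ≤ ε / 2 := by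
        have h1 : (1:ℝ) ≤ (m:ℝ) := by exact_mod_cast hm1
        nlinarith
      nlinarith
    linarith
end

section
/- Let k ≥ 1 be an integer, G a graph, W ⊆ V(G) with G[W] having maximum degree at most εk, and let U = {v ∈ W : deg_W(v) = τ} with |U| ≥ βk, where τ is a positive integer and ε, β > 0. Let f be a positive integer with τ·ε·β^{-1}·C(f,2) ≤ 1/2. Define F as the set of f-element subsets A of U such that no two vertices of A are adjacent in G and no two vertices of A have a common neighbor in W. Then |F| ≥ C(|U|, f) - (τ|U|/2)·C(|U|-2, f-2) - (τεk|U|/2)·C(|U|-2, f-2). -/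
open Finset

private lemma count_supersets_aux {V : Type*} [DecidableEq V] (Uf : Finset V) (f : ℕ)
    {a b : V} (ha : a ∈ Uf) (hb : b ∈ Uf) (hab : a ≠ b) :
    ((Uf.powersetCard f).filter (fun A => a ∈ A ∧ b ∈ A)).card
      ≤ Nat.choose (Uf.card - 2) (f - 2) := by
  have h2 : ({a, b} : Finset V).card = 2 := Finset.card_pair hab
  have hpair : ∀ A : Finset V, a ∈ A → b ∈ A → ({a,b} : Finset V) ⊆ A := by
    intro A h1 h2 x hx
    simp only [mem_insert, mem_singleton] at hx
    rcases hx with rfl | rfl <;> assumption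
  have hmain : ((Uf.powersetCard f).filter (fun A => a ∈ A ∧ b ∈ A)).card
      ≤ ((Uf \ {a,b}).powersetCard (f - 2)).card := by
    apply Finset.card_le_card_of_injOn (fun A => A \ {a,b})
    · intro A hA
      simp only [mem_coe, mem_filter, mem_powersetCard] at hA
      obtain ⟨⟨hAU, hAf⟩, haA, hbA⟩ := hA
      rw [mem_coe, mem_powersetCard]
      exact ⟨sdiff_subset_sdiff hAU (le_refl _),
        by rw [card_sdiff_of_subset (hpair A haA hbA), h2, hAf]⟩
    · intro A hA B hB hAB
      simp only [mem_coe, mem_filter, mem_powersetCard] at hA hB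
      have : A \ {a,b} ∪ {a,b} = B \ {a,b} ∪ {a,b} := by
        simp only at hAB; rw [hAB]
      rwa [sdiff_union_of_subset (hpair A hA.2.1 hA.2.2),
        sdiff_union_of_subset (hpair B hB.2.1 hB.2.2)] at this
  calc _ ≤ _ := hmain
    _ = Nat.choose (Uf.card - 2) (f-2) := by
        rw [Finset.card_powersetCard, card_sdiff_of_subset (hpair Uf ha hb), h2]

private lemma pairs_le_real {V : Type*} [DecidableEq V] [LinearOrder V] (Uf : Finset V)
    (r : V → V → Prop) [DecidableRel r]
    (hsymm : ∀ a b, r a b → r b a) (t : ℝ)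
    (hdeg : ∀ a ∈ Uf, (((Uf.filter (fun b => r a b)).card : ℝ)) ≤ t) :
    2 * (((Uf ×ˢ Uf).filter (fun p => p.1 < p.2 ∧ r p.1 p.2)).card : ℝ)
      ≤ (Uf.card : ℝ) * t := by
  set P := (Uf ×ˢ Uf).filter (fun p => p.1 < p.2 ∧ r p.1 p.2) with hP
  set Pord := (Uf ×ˢ Uf).filter (fun p => p.1 ≠ p.2 ∧ r p.1 p.2) with hPord
  have hsw : P.image Prod.swap ∪ P ⊆ Pord := by
    intro p hp
    simp only [mem_union, mem_image, hP, hPord, mem_filter, mem_product] at *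
    rcases hp with ⟨q, ⟨⟨hq1, hq2⟩, hlt, hr⟩, rfl⟩ | ⟨⟨h1,h2⟩, hlt, hr⟩
    · exact ⟨⟨hq2, hq1⟩, ne_of_gt hlt, hsymm _ _ hr⟩
    · exact ⟨⟨h1, h2⟩, ne_of_lt hlt, hr⟩
  have hdisj : Disjoint (P.image Prod.swap) P := by
    rw [Finset.disjoint_left]
    intro p hp hp2
    simp only [mem_image, hP, mem_filter] at hp hp2
    obtain ⟨q, ⟨_, hlt, _⟩, rfl⟩ := hp
    exact absurd hp2.2.1 (not_lt.2 (le_of_lt hlt))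
  have hcard : 2 * P.card ≤ Pord.card := by
    have := Finset.card_le_card hsw
    rw [Finset.card_union_of_disjoint hdisj,
      Finset.card_image_of_injective _ Prod.swap_injective] at this
    omega
  have hord : (Pord.card : ℝ) ≤ (Uf.card : ℝ) * t := by
    have hfib : Pord.card = ∑ a ∈ Uf, (Pord.filter (fun p => p.1 = a)).card := by
      apply Finset.card_eq_sum_card_fiberwise
      intro p hp
      simp only [mem_coe, hPord, mem_filter, mem_product] at hp
      exact hp.1.1
    have hfib2 : ∀ a ∈ Uf, ((Pord.filter (fun p => p.1 = a)).card : ℝ) ≤ t := by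
      intro a ha
      refine le_trans ?_ (hdeg a ha)
      have : (Pord.filter (fun p => p.1 = a)).card ≤ (Uf.filter (fun b => r a b)).card := by
        apply Finset.card_le_card_of_injOn Prod.snd
        · intro p hp
          simp only [mem_coe, hPord, mem_filter, mem_product] at hp ⊢
          obtain ⟨⟨⟨_, h2⟩, _, hr⟩, rfl⟩ := hp
          exact ⟨h2, hr⟩
        · intro p hp q hq hpq
          simp only [mem_coe, mem_filter] at hp hq
          exact Prod.ext (hp.2.trans hq.2.symm) hpq
      exact_mod_cast this
    calc (Pord.card : ℝ) = ∑ a ∈ Uf, ((Pord.filter (fun p => p.1 = a)).card : ℝ) := by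
          rw [hfib]; push_cast; ring
      _ ≤ ∑ a ∈ Uf, t := Finset.sum_le_sum hfib2
      _ = (Uf.card : ℝ) * t := by rw [Finset.sum_const, nsmul_eq_mul]
  calc 2 * (P.card : ℝ) ≤ (Pord.card : ℝ) := by exact_mod_cast hcard
    _ ≤ _ := hord

theorem good_subsets_lower_bound {V : Type*} [Fintype V] (G : SimpleGraph V)
    (W : Set V) (k τ f : ℕ) (ε β : ℝ)
    (hk : 0 < k) (hτ : 0 < τ) (hf : 0 < f) (hε : 0 < ε) (hβ : 0 < β)
    (hΔ : ∀ v ∈ W, (((G.neighborSet v) ∩ W).ncard : ℝ) ≤ ε * k)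
    (U : Set V) (hU : U = {v | v ∈ W ∧ ((G.neighborSet v) ∩ W).ncard = τ})
    (hUcard : β * k ≤ (U.ncard : ℝ))
    (hfsmall : (τ : ℝ) * ε * β⁻¹ * (Nat.choose f 2) ≤ 1 / 2)
    (F : Set (Finset V))
    (hF : F = {A : Finset V | ↑A ⊆ U ∧ A.card = f ∧
      (∀ a ∈ A, ∀ b ∈ A, a ≠ b → ¬ G.Adj a b) ∧
      (∀ a ∈ A, ∀ b ∈ A, a ≠ b → ∀ w ∈ W, ¬ (G.Adj a w ∧ G.Adj b w))}) :
    (Nat.choose U.ncard f : ℝ) -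
        (τ * U.ncard / 2) * (Nat.choose (U.ncard - 2) (f - 2)) -
        (τ * ε * k * U.ncard / 2) * (Nat.choose (U.ncard - 2) (f - 2)) ≤
      (F.ncard : ℝ) := by
  classical
  letI : LinearOrder V := LinearOrder.lift' (Fintype.equivFin V) (Fintype.equivFin V).injective
  have hUW : U ⊆ W := by rw [hU]; intro v hv; exact hv.1
  have hUdeg : ∀ a ∈ U, ((G.neighborSet a) ∩ W).ncard = τ := by
    rw [hU]; intro a ha; exact ha.2
  set Uf : Finset V := U.toFinset with hUfdef
  have hmemUf : ∀ x, x ∈ Uf ↔ x ∈ U := fun x => Set.mem_toFinset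
  have hUcard' : U.ncard = Uf.card := Set.ncard_eq_toFinset_card' U
  set All := Uf.powersetCard f with hAlldef
  set goodp : Finset V → Prop := fun A => (∀ a ∈ A, ∀ b ∈ A, a ≠ b → ¬ G.Adj a b) ∧
      (∀ a ∈ A, ∀ b ∈ A, a ≠ b → ∀ w ∈ W, ¬ (G.Adj a w ∧ G.Adj b w)) with hgoodp
  set Goodf := All.filter goodp with hGoodfdef
  -- F is the coercion of Goodf
  have hFG : F.ncard = Goodf.card := by
    have : F = ↑Goodf := by
      rw [hF]
      ext A
      simp only [Set.mem_setOf_eq, Finset.coe_subset, Finset.mem_coe, hGoodfdef,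
        mem_filter, hAlldef, mem_powersetCard, hgoodp]
      constructor
      · rintro ⟨h1, h2, h3, h4⟩
        exact ⟨⟨fun x hx => (hmemUf x).2 (h1 hx), h2⟩, h3, h4⟩
      · rintro ⟨⟨h1, h2⟩, h3, h4⟩
        exact ⟨fun x hx => (hmemUf x).1 (h1 hx), h2, h3, h4⟩
    rw [this, Set.ncard_coe_finset]
  set r1 : V → V → Prop := fun a b => G.Adj a b with hr1
  set r2 : V → V → Prop := fun a b => ∃ w ∈ W, G.Adj a w ∧ G.Adj b w with hr2
  set P1 := (Uf ×ˢ Uf).filter (fun p => p.1 < p.2 ∧ r1 p.1 p.2) with hP1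
  set P2 := (Uf ×ˢ Uf).filter (fun p => p.1 < p.2 ∧ r2 p.1 p.2) with hP2
  -- Step 1
  have step1 : All.card ≤ Goodf.card + (P1.card + P2.card) * Nat.choose (Uf.card - 2) (f - 2) := by
    have hsplit : Goodf.card + (All.filter (fun A => ¬ goodp A)).card = All.card :=
      Finset.card_filter_add_card_filter_not _
    have hbadsub : All.filter (fun A => ¬ goodp A) ⊆
        (P1 ∪ P2).biUnion (fun p => All.filter (fun A => p.1 ∈ A ∧ p.2 ∈ A)) := by
      intro A hA
      simp only [mem_filter, hgoodp, not_and_or] at hA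
      obtain ⟨hAAll, hbad⟩ := hA
      have hAU : A ⊆ Uf := by
        rw [hAlldef, mem_powersetCard] at hAAll; exact hAAll.1
      rw [mem_biUnion]
      have key : ∃ a ∈ A, ∃ b ∈ A, a < b ∧ (r1 a b ∨ r2 a b) := by
        rcases hbad with hbad | hbad
        · push_neg at hbad
          obtain ⟨a, ha, b, hb, hab, hadj⟩ := hbad
          rcases lt_or_gt_of_ne hab with h | h
          · exact ⟨a, ha, b, hb, h, Or.inl hadj⟩
          · exact ⟨b, hb, a, ha, h, Or.inl hadj.symm⟩
        · push_neg at hbad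
          obtain ⟨a, ha, b, hb, hab, w, hw, hadj⟩ := hbad
          rcases lt_or_gt_of_ne hab with h | h
          · exact ⟨a, ha, b, hb, h, Or.inr ⟨w, hw, hadj⟩⟩
          · exact ⟨b, hb, a, ha, h, Or.inr ⟨w, hw, hadj.2, hadj.1⟩⟩
      obtain ⟨a, ha, b, hb, hlt, hr⟩ := key
      refine ⟨(a, b), ?_, ?_⟩
      · rw [mem_union]
        rcases hr with hr | hr
        · left; rw [hP1, mem_filter, mem_product]
          exact ⟨⟨hAU ha, hAU hb⟩, hlt, hr⟩
        · right; rw [hP2, mem_filter, mem_product]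
          exact ⟨⟨hAU ha, hAU hb⟩, hlt, hr⟩
      · rw [mem_filter]; exact ⟨hAAll, ha, hb⟩
    have hbound : (All.filter (fun A => ¬ goodp A)).card ≤
        (P1.card + P2.card) * Nat.choose (Uf.card - 2) (f - 2) := by
      calc (All.filter (fun A => ¬ goodp A)).card
          ≤ ((P1 ∪ P2).biUnion (fun p => All.filter (fun A => p.1 ∈ A ∧ p.2 ∈ A))).card :=
            Finset.card_le_card hbadsub
        _ ≤ ∑ p ∈ P1 ∪ P2, (All.filter (fun A => p.1 ∈ A ∧ p.2 ∈ A)).card :=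
            Finset.card_biUnion_le
        _ ≤ ∑ p ∈ P1 ∪ P2, Nat.choose (Uf.card - 2) (f - 2) := by
            apply Finset.sum_le_sum
            intro p hp
            have hmem : p.1 ∈ Uf ∧ p.2 ∈ Uf ∧ p.1 ≠ p.2 := by
              simp only [mem_union, hP1, hP2, mem_filter, mem_product] at hp
              rcases hp with ⟨⟨h1, h2⟩, hlt, _⟩ | ⟨⟨h1, h2⟩, hlt, _⟩ <;>
                exact ⟨h1, h2, ne_of_lt hlt⟩
            exact count_supersets_aux Uf f hmem.1 hmem.2.1 hmem.2.2
        _ ≤ (P1.card + P2.card) * Nat.choose (Uf.card - 2) (f - 2) := by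
            rw [Finset.sum_const, smul_eq_mul]
            exact Nat.mul_le_mul_right _ (Finset.card_union_le _ _)
    omega
  -- Step 2 : degree bounds
  have hdeg1 : ∀ a ∈ Uf, (((Uf.filter (fun b => r1 a b)).card : ℝ)) ≤ (τ : ℝ) := by
    intro a ha
    have hsub : Uf.filter (fun b => r1 a b) ⊆ (G.neighborSet a ∩ W).toFinset := by
      intro b hb
      rw [mem_filter] at hb
      rw [Set.mem_toFinset]
      exact ⟨hb.2, hUW ((hmemUf b).1 hb.1)⟩
    have := Finset.card_le_card hsub
    have hcard : (G.neighborSet a ∩ W).toFinset.card = τ := by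
      rw [← Set.ncard_eq_toFinset_card']
      exact hUdeg a ((hmemUf a).1 ha)
    rw [hcard] at this
    exact_mod_cast this
  have hdeg2 : ∀ a ∈ Uf, (((Uf.filter (fun b => r2 a b)).card : ℝ)) ≤ (τ : ℝ) * (ε * k) := by
    intro a ha
    set Na := (G.neighborSet a ∩ W).toFinset with hNa
    have hNacard : Na.card = τ := by
      rw [hNa, ← Set.ncard_eq_toFinset_card']
      exact hUdeg a ((hmemUf a).1 ha)
    have hsub : Uf.filter (fun b => r2 a b) ⊆
        Na.biUnion (fun w => (G.neighborSet w ∩ W).toFinset) := by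
      intro b hb
      rw [mem_filter] at hb
      obtain ⟨hbU, w, hw, haw, hbw⟩ := hb
      rw [mem_biUnion]
      refine ⟨w, ?_, ?_⟩
      · rw [hNa, Set.mem_toFinset]; exact ⟨haw, hw⟩
      · rw [Set.mem_toFinset]; exact ⟨hbw.symm, hUW ((hmemUf b).1 hbU)⟩
    calc (((Uf.filter (fun b => r2 a b)).card : ℝ))
        ≤ ((Na.biUnion (fun w => (G.neighborSet w ∩ W).toFinset)).card : ℝ) := by
          exact_mod_cast Finset.card_le_card hsub
      _ ≤ ((∑ w ∈ Na, ((G.neighborSet w ∩ W).toFinset).card : ℕ) : ℝ) := by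
          exact_mod_cast Finset.card_biUnion_le
      _ = ∑ w ∈ Na, (((G.neighborSet w ∩ W).toFinset).card : ℝ) := by push_cast; ring
      _ ≤ ∑ w ∈ Na, ε * k := by
          apply Finset.sum_le_sum
          intro w hw
          rw [hNa, Set.mem_toFinset] at hw
          have := hΔ w hw.2
          rw [Set.ncard_eq_toFinset_card'] at this
          exact this
      _ = (τ : ℝ) * (ε * k) := by
          rw [Finset.sum_const, nsmul_eq_mul, hNacard]
  have hP1bound : 2 * (P1.card : ℝ) ≤ (Uf.card : ℝ) * τ :=
    pairs_le_real Uf r1 (fun a b h => h.symm) _ hdeg1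
  have hP2bound : 2 * (P2.card : ℝ) ≤ (Uf.card : ℝ) * ((τ : ℝ) * (ε * k)) :=
    pairs_le_real Uf r2 (fun a b ⟨w, hw, h1, h2⟩ => ⟨w, hw, h2, h1⟩) _ hdeg2
  -- assemble
  have hAllcard : All.card = Nat.choose Uf.card f := by
    rw [hAlldef, Finset.card_powersetCard]
  have hC : (0 : ℝ) ≤ (Nat.choose (Uf.card - 2) (f - 2) : ℝ) := Nat.cast_nonneg _
  have step1R : (Nat.choose Uf.card f : ℝ) ≤ (Goodf.card : ℝ) +
      ((P1.card : ℝ) + (P2.card : ℝ)) * (Nat.choose (Uf.card - 2) (f - 2) : ℝ) := by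
    rw [← hAllcard]
    exact_mod_cast step1
  rw [hFG, hUcard']
  have hPsum : ((P1.card : ℝ) + (P2.card : ℝ)) * (Nat.choose (Uf.card - 2) (f - 2) : ℝ)
      ≤ ((τ : ℝ) * Uf.card / 2 + (τ : ℝ) * ε * k * Uf.card / 2) *
        (Nat.choose (Uf.card - 2) (f - 2) : ℝ) := by
    apply mul_le_mul_of_nonneg_right _ hC
    nlinarith [hP1bound, hP2bound]
  linarith [step1R, hPsum]
end
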